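/- Let P₁, …, Pₙ and Q₁, …, Qₙ be CNF formulas and let x₁, …, xₙ be pairwise distinct variables such that no x_j occurs (with either polarity) in any clause of any P_m or Q_m. For each j let Q'_j = { C ∪ {x_j} | C ∈ Q_j }. Then for every i with 1 ≤ i ≤ n, the formula F_i = Q_i ∪ ⋃_{j=1}^{i} P_j is satisfiable if and only if there exists a truth assignment σ with σ x_i = false that satisfies ⋃_{j=1}^{i} (P_j ∪ Q'_j). In other words, solving the cumulative clause set of the incremental SAT solver under the single assumption x_i = false is equisatisfiable with solving F_i. -/
import Mathlib


/-- A literal is a variable together with a Boolean polarity. -/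
abbrev Lit (V : Type*) := V × Bool

/-- A clause is a finite set of literals. -/
abbrev Clause (V : Type*) := Finset (Lit V)

/-- A CNF formula is a set of clauses. -/
abbrev Formula (V : Type*) := Set (Clause V)

/-- A truth assignment satisfies a clause iff it satisfies some literal of it. -/
def SatClause {V : Type*} (σ : V → Bool) (C : Clause V) : Prop :=
  ∃ l ∈ C, σ l.1 = l.2

/-- A truth assignment satisfies a formula iff it satisfies every clause of it. -/
def SatFormula {V : Type*} (σ : V → Bool) (F : Formula V) : Prop :=
  ∀ C ∈ F, SatClause σ C

/-- A formula `F` entails a clause `C` iff every assignment satisfying `F` satisfies `C`. -/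
def Entails {V : Type*} (F : Formula V) (C : Clause V) : Prop :=
  ∀ σ : V → Bool, SatFormula σ F → SatClause σ C

/-- A variable occurs in a clause iff some literal of the clause has that variable. -/
def OccursInClause {V : Type*} (x : V) (C : Clause V) : Prop :=
  ∃ l ∈ C, l.1 = x

/-- A variable occurs in a formula iff it occurs in some clause of the formula. -/
def OccursInFormula {V : Type*} (x : V) (F : Formula V) : Prop :=
  ∃ C ∈ F, OccursInClause x C

/-- Correctness of the assumption-based incremental SAT scheme.
With pairwise distinct selector variables `x₁, …, xₙ` fresh for all the
formulas `P₁, …, Pₙ, Q₁, …, Qₙ`, and `Q'_j` obtained from `Q_j` by adding the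
positive literal `x_j` to every clause, the formula
`F_i = Q_i ∪ ⋃_{j=1}^{i} P_j` is satisfiable iff
`⋃_{j=1}^{i} (P_j ∪ Q'_j)` is satisfiable under the single assumption
`x_i = false`. -/
theorem incremental_sat_correct {V : Type*} [DecidableEq V]
    (n : ℕ) (P Q : ℕ → Formula V) (x : ℕ → V)
    (hinj : ∀ j k, 1 ≤ j → j ≤ n → 1 ≤ k → k ≤ n → x j = x k → j = k)
    (hfreshP : ∀ j m, 1 ≤ j → j ≤ n → 1 ≤ m → m ≤ n → ¬ OccursInFormula (x j) (P m))
    (hfreshQ : ∀ j m, 1 ≤ j → j ≤ n → 1 ≤ m → m ≤ n → ¬ OccursInFormula (x j) (Q m))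
    (Q' : ℕ → Formula V) (hQ' : ∀ j, Q' j = (fun C => insert (x j, true) C) '' (Q j)) :
    ∀ i, 1 ≤ i → i ≤ n →
      ((∃ σ : V → Bool, SatFormula σ (Q i ∪ ⋃ j ∈ Finset.Icc 1 i, P j)) ↔
        (∃ σ : V → Bool, σ (x i) = false ∧
          SatFormula σ (⋃ j ∈ Finset.Icc 1 i, (P j ∪ Q' j)))) := by

  intro i hi1 hin
  constructor
  · rintro ⟨σ, hσ⟩
    classical
    refine ⟨fun v => if v = x i then false else
      if ∃ j, 1 ≤ j ∧ j ≤ n ∧ x j = v then true else σ v, by simp, ?_⟩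
    intro C hC
    simp only [Set.mem_iUnion, Set.mem_union] at hC
    obtain ⟨j, hj, hC⟩ := hC
    simp only [Finset.mem_Icc] at hj
    have hj1 := hj.1
    have hjn := hj.2.trans hin
    rcases hC with hC | hC
    · -- C ∈ P j : σ satisfies it via a fresh literal
      obtain ⟨l, hlC, hl⟩ := hσ C (Or.inr (by
        simp only [Set.mem_iUnion]; exact ⟨j, Finset.mem_Icc.mpr hj, hC⟩))
      refine ⟨l, hlC, ?_⟩
      have h1 : l.1 ≠ x i := fun h =>
        hfreshP i j hi1 hin hj1 hjn ⟨C, hC, l, hlC, h⟩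
      have h2 : ¬ ∃ k, 1 ≤ k ∧ k ≤ n ∧ x k = l.1 := by
        rintro ⟨k, hk1, hkn, hk⟩
        exact hfreshP k j hk1 hkn hj1 hjn ⟨C, hC, l, hlC, hk.symm⟩
      simp [h1, h2, hl]
    · -- C ∈ Q' j
      rw [hQ'] at hC
      obtain ⟨D, hD, rfl⟩ := hC
      by_cases hji : j = i
      · subst hji
        obtain ⟨l, hlD, hl⟩ := hσ D (Or.inl hD)
        refine ⟨l, Finset.mem_insert_of_mem hlD, ?_⟩
        have h1 : l.1 ≠ x j := fun h =>
          hfreshQ j j hj1 hjn hj1 hjn ⟨D, hD, l, hlD, h⟩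
        have h2 : ¬ ∃ k, 1 ≤ k ∧ k ≤ n ∧ x k = l.1 := by
          rintro ⟨k, hk1, hkn, hk⟩
          exact hfreshQ k j hk1 hkn hj1 hjn ⟨D, hD, l, hlD, hk.symm⟩
        simp [h1, h2, hl]
      · refine ⟨(x j, true), Finset.mem_insert_self _ _, ?_⟩
        have h1 : x j ≠ x i := fun h => hji (hinj j i hj1 hjn hi1 hin h)
        have h2 : ∃ k, 1 ≤ k ∧ k ≤ n ∧ x k = x j := ⟨j, hj1, hjn, rfl⟩
        simp [h1, h2]
  · rintro ⟨σ, hxi, hσ⟩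
    refine ⟨σ, ?_⟩
    intro C hC
    rcases hC with hC | hC
    · -- C ∈ Q i
      have hmem : insert (x i, true) C ∈ ⋃ j ∈ Finset.Icc 1 i, (P j ∪ Q' j) := by
        simp only [Set.mem_iUnion]
        exact ⟨i, Finset.mem_Icc.mpr ⟨hi1, le_refl i⟩,
          Or.inr (by rw [hQ']; exact ⟨C, hC, rfl⟩)⟩
      obtain ⟨l, hl, hsat⟩ := hσ _ hmem
      rcases Finset.mem_insert.mp hl with rfl | hl
      · simp [hxi] at hsat
      · exact ⟨l, hl, hsat⟩
    · simp only [Set.mem_iUnion] at hC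
      obtain ⟨j, hj, hC⟩ := hC
      exact hσ C (by simp only [Set.mem_iUnion]; exact ⟨j, hj, Or.inl hC⟩)
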